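/- arXiv:math/0702018 — 5 statements merged into one kernel-verified Lean document; each statement's English description precedes it below -/
import Mathlib

section
/- Fix l ≥ 3. Consider the system of polynomial equations in variables h_1, ..., h_l over ℂ: h_i h_j = 0 for all 1 ≤ i ≤ l-2 and j with j - i ≥ 2, together with h_i (h_{i-1} + h_i + h_{i+1} + 1) = 0 for all 2 ≤ i ≤ l-1. Then (h_1,...,h_l) is a solution if and only if it lies in one of the following families: (i) h_1 = t and h_j = 0 for j ≥ 2, for some t ∈ ℂ; (ii) h_l = t and h_j = 0 for j ≤ l-1, for some t ∈ ℂ; (iii) for some 1 ≤ i ≤ l-1 and t ∈ ℂ, h_i = t, h_{i+1} = -1 - t, and h_j = 0 for j ∉ {i, i+1}. -/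
/-!
The first block of equations says that no two indices at distance at least two both carry a
nonzero value, so the support of `h` on `[1, l]` lies in some `{k, k + 1}`. If both `h k` and
`h (k + 1)` are nonzero, the second block at `k + 1` or at `k` (one of them lies in `[2, l - 1]`
because `l ≥ 3`) forces `h k + h (k + 1) + 1 = 0`. If the support is a single interior index `k`,
the equation at `k` forces `h k = -1`, which is family (iii) with `h (k + 1) = 0`. Otherwise the
support lies in `{1, l}`, and `h 1 * h l = 0` leaves family (i) or (ii).
-/

def IsSolution (l : ℕ) (h : ℕ → ℂ) : Prop :=
  (∀ i j : ℕ, 1 ≤ i → i ≤ l - 2 → i + 2 ≤ j → j ≤ l → h i * h j = 0) ∧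
  (∀ i : ℕ, 2 ≤ i → i ≤ l - 1 → h i * (h (i - 1) + h i + h (i + 1) + 1) = 0)

variable {l : ℕ} {h : ℕ → ℂ}

namespace IsSolution

theorem eq_zero_of_far (hs : IsSolution l h) {j k : ℕ} (hk : h k ≠ 0) (hk1 : 1 ≤ k) (hkl : k ≤ l)
    (hj1 : 1 ≤ j) (hjl : j ≤ l) (hjk : k + 2 ≤ j ∨ j + 2 ≤ k) : h j = 0 := by
  rcases hjk with hjk | hjk
  · exact (mul_eq_zero.1 (hs.1 k j hk1 (by omega) hjk hjl)).resolve_left hk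
  · exact (mul_eq_zero.1 (hs.1 j k hj1 (by omega) hjk hkl)).resolve_right hk

theorem eq_zero_off_adjacent (hs : IsSolution l h) {j k : ℕ} (hk1 : 1 ≤ k) (hkl : k + 1 ≤ l)
    (hk : h k ≠ 0) (hk' : h (k + 1) ≠ 0) (hj1 : 1 ≤ j) (hjl : j ≤ l) (hjk : j ≠ k)
    (hjk' : j ≠ k + 1) : h j = 0 := by
  rcases Nat.lt_or_gt_of_ne hjk with hlt | hgt
  · exact hs.eq_zero_of_far hk' (by omega) hkl hj1 hjl (by omega)
  · exact hs.eq_zero_of_far hk hk1 (by omega) hj1 hjl (by omega)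

theorem succ_eq_of_adjacent (hs : IsSolution l h) (hl : 3 ≤ l) {k : ℕ} (hk1 : 1 ≤ k)
    (hkl : k + 1 ≤ l) (hk : h k ≠ 0) (hk' : h (k + 1) ≠ 0) : h (k + 1) = -1 - h k := by
  have off : ∀ j, 1 ≤ j → j ≤ l → j ≠ k → j ≠ k + 1 → h j = 0 := fun _ =>
    hs.eq_zero_off_adjacent hk1 hkl hk hk'
  rcases Nat.lt_or_ge (k + 1) l with hlt | hge
  · have heq := hs.2 (k + 1) (by omega) (by omega)
    rw [Nat.add_sub_cancel, off (k + 1 + 1) (by omega) (by omega) (by omega) (by omega)] at heq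
    linear_combination (mul_eq_zero.1 heq).resolve_left hk'
  · have heq := hs.2 k (by omega) (by omega)
    rw [off (k - 1) (by omega) (by omega) (by omega) (by omega)] at heq
    linear_combination (mul_eq_zero.1 heq).resolve_left hk

theorem eq_neg_one_of_isolated (hs : IsSolution l h) {k : ℕ} (hk2 : 2 ≤ k) (hkl : k ≤ l - 1)
    (hk : h k ≠ 0) (hprev : h (k - 1) = 0) (hnext : h (k + 1) = 0) : h k = -1 := by
  have heq := hs.2 k hk2 hkl
  rw [hprev, hnext] at heq
  linear_combination (mul_eq_zero.1 heq).resolve_left hk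

theorem mem_families (hs : IsSolution l h) (hl : 3 ≤ l) :
    (∀ j : ℕ, 2 ≤ j → j ≤ l → h j = 0) ∨
    (∀ j : ℕ, 1 ≤ j → j ≤ l - 1 → h j = 0) ∨
    (∃ i : ℕ, 1 ≤ i ∧ i ≤ l - 1 ∧ h (i + 1) = -1 - h i ∧
      ∀ j : ℕ, 1 ≤ j → j ≤ l → j ≠ i → j ≠ i + 1 → h j = 0) := by
  by_cases pair : ∃ k, 1 ≤ k ∧ k + 1 ≤ l ∧ h k ≠ 0 ∧ h (k + 1) ≠ 0
  · obtain ⟨k, hk1, hkl, hk, hk'⟩ := pair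
    exact Or.inr <| Or.inr ⟨k, hk1, by omega, hs.succ_eq_of_adjacent hl hk1 hkl hk hk',
      fun j hj1 hjl => hs.eq_zero_off_adjacent hk1 hkl hk hk' hj1 hjl⟩
  push Not at pair
  by_cases interior : ∃ k, 2 ≤ k ∧ k ≤ l - 1 ∧ h k ≠ 0
  · obtain ⟨k, hk2, hkl, hk⟩ := interior
    have hprev : h (k - 1) = 0 := by
      by_contra hne
      have hk0 := pair (k - 1) (by omega) (by omega) hne
      rw [Nat.sub_add_cancel (by omega)] at hk0
      exact hk hk0
    have hnext : h (k + 1) = 0 := pair k (by omega) (by omega) hk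
    have hrel : h (k + 1) = -1 - h k := by
      rw [hnext, hs.eq_neg_one_of_isolated hk2 hkl hk hprev hnext]
      ring
    refine Or.inr <| Or.inr ⟨k, by omega, hkl, hrel, fun j hj1 hjl hjk hjk' => ?_⟩
    by_cases hj : j = k - 1
    · rwa [hj]
    · exact hs.eq_zero_of_far hk (by omega) (by omega) hj1 hjl (by omega)
  push Not at interior
  rcases mul_eq_zero.1 (hs.1 1 l le_rfl (by omega) (by omega) le_rfl) with h1 | hl'
  · refine Or.inr <| Or.inl fun j hj1 hjl => ?_
    obtain rfl | hj2 := eq_or_lt_of_le hj1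
    · exact h1
    · exact interior j hj2 hjl
  · refine Or.inl fun j hj2 hjl => ?_
    obtain rfl | hjl' := eq_or_lt_of_le hjl
    · exact hl'
    · exact interior j hj2 (by omega)

end IsSolution

theorem isSolution_of_forall_two_le (hz : ∀ j : ℕ, 2 ≤ j → j ≤ l → h j = 0) : IsSolution l h :=
  ⟨fun _ j _ _ hij hjl => by rw [hz j (by omega) hjl, mul_zero],
    fun i hi2 hil => by rw [hz i hi2 (by omega), zero_mul]⟩

theorem isSolution_of_forall_le_sub_one (hz : ∀ j : ℕ, 1 ≤ j → j ≤ l - 1 → h j = 0) :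
    IsSolution l h :=
  ⟨fun i _ hi1 hil _ _ => by rw [hz i hi1 (by omega), zero_mul],
    fun i hi2 hil => by rw [hz i (by omega) hil, zero_mul]⟩

theorem isSolution_of_adjacent {k : ℕ} (hrel : h (k + 1) = -1 - h k)
    (hz : ∀ j : ℕ, 1 ≤ j → j ≤ l → j ≠ k → j ≠ k + 1 → h j = 0) : IsSolution l h := by
  refine ⟨fun i j hi1 hil hij hjl => ?_, fun i hi2 hil => ?_⟩
  · by_cases hi : i = k ∨ i = k + 1
    · rw [hz j (by omega) hjl (by omega) (by omega), mul_zero]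
    · rw [hz i hi1 (by omega) (by omega) (by omega), zero_mul]
  · by_cases hik : i = k
    · subst hik
      rw [hz (i - 1) (by omega) (by omega) (by omega) (by omega), hrel]
      ring
    by_cases hik' : i = k + 1
    · subst hik'
      rw [hz (k + 1 + 1) (by omega) (by omega) (by omega) (by omega), Nat.add_sub_cancel, hrel]
      ring
    rw [hz i (by omega) (by omega) hik hik', zero_mul]

/-- For `l ≥ 3`, the solutions `(h 1, …, h l)` of the system
`hᵢ hⱼ = 0` (`1 ≤ i ≤ l-2`, `j - i ≥ 2`, `j ≤ l`) and
`hᵢ (h_{i-1} + hᵢ + h_{i+1} + 1) = 0` (`2 ≤ i ≤ l-1`)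
are exactly those lying in one of the three families:
(i) `h j = 0` for `2 ≤ j ≤ l`;
(ii) `h j = 0` for `1 ≤ j ≤ l-1`;
(iii) for some `1 ≤ i ≤ l-1`: `h (i+1) = -1 - h i` and `h j = 0` for all other `1 ≤ j ≤ l`. -/
theorem stmt5 (l : ℕ) (hl : 3 ≤ l) (h : ℕ → ℂ) :
    ((∀ i j : ℕ, 1 ≤ i → i ≤ l - 2 → i + 2 ≤ j → j ≤ l → h i * h j = 0) ∧
     (∀ i : ℕ, 2 ≤ i → i ≤ l - 1 → h i * (h (i-1) + h i + h (i+1) + 1) = 0)) ↔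
    ((∀ j : ℕ, 2 ≤ j → j ≤ l → h j = 0) ∨
     (∀ j : ℕ, 1 ≤ j → j ≤ l - 1 → h j = 0) ∨
     (∃ i : ℕ, 1 ≤ i ∧ i ≤ l - 1 ∧ h (i+1) = -1 - h i ∧
        ∀ j : ℕ, 1 ≤ j → j ≤ l → j ≠ i → j ≠ i + 1 → h j = 0)) := by
  refine ⟨fun hs => IsSolution.mem_families hs hl, ?_⟩
  rintro (hz | hz | ⟨k, -, -, hrel, hz⟩)
  · exact isSolution_of_forall_two_le hz
  · exact isSolution_of_forall_le_sub_one hz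
  · exact isSolution_of_adjacent hrel hz
end

section
/- Let e, f, h be elements of an associative ℂ-algebra satisfying the sl_2 relations [h,e] = 2e, [h,f] = -2f, [e,f] = h (e.g. in U(sl_2)). Then for all integers m ≥ k ≥ 0, e^m f^k ≡ m(m-1)···(m-k+1) · (h-m+k)(h-m+k-1)···(h-m+1) · e^{m-k} modulo the left ideal generated by e^{m-k+1}, where the product of (h - j) factors is over j from m-k down to m-1 (i.e. k consecutive factors). -/
/-!
Since `e h = (h - 2) e`, pushing `f` through a power of `e` gives
`e^(n+1) f = f e^(n+1) + (n+1)(h-n) e^n`. Hence `e^(n+1) f ≡ (n+1)(h-n) e^n` modulo `A e^(n+1)`,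
and right multiplication by `f` maps `A e^(n+2)` into `A e^(n+1)`. Writing `m = n + k`, the
congruence for `e^(n+k+1) f^(k+1)` is that for `e^((n+1)+k) f^k` multiplied on the right by `f`,
which contributes the factor `(n+1)(h-n)`.
-/

section

variable {A : Type*} [Ring A]

theorem commute_prod_map_sub_natCast (h : A) (l : List ℕ) (c d : ℕ) :
    Commute (l.map fun j => h - ((c + j : ℕ) : A)).prod (h - d) := by
  refine Commute.list_prod_left _ _ fun x hx => ?_
  obtain ⟨j, -, rfl⟩ := List.mem_map.mp hx
  exact ((Commute.refl h).sub_right (Nat.cast_commute d h).symm).sub_left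
    ((Nat.cast_commute _ h).sub_right (Nat.commute_cast _ _))

theorem prod_range_succ_map_sub_natCast (h : A) (n k : ℕ) :
    ((List.range (k + 1)).map fun j => h - ((n + j : ℕ) : A)).prod =
      (h - n) * ((List.range k).map fun j => h - ((n + 1 + j : ℕ) : A)).prod := by
  rw [List.prod_range_succ']
  simp only [add_zero, Nat.succ_eq_add_one, add_assoc, add_comm 1]

variable {e f h : A}

theorem mul_sub_natCast_eq_of_sl2 (he : h * e - e * h = 2 * e) (c : ℕ) :
    e * (h - c) = (h - c - 2) * e := by
  have heh : e * h = h * e - 2 * e := by rw [← he]; abel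
  rw [mul_sub, heh, ← Nat.cast_comm]; noncomm_ring

theorem pow_succ_mul_of_sl2 (he : h * e - e * h = 2 * e) (hef : e * f - f * e = h) (n : ℕ) :
    e ^ (n + 1) * f = f * e ^ (n + 1) + ((n + 1 : ℕ) : A) * ((h - n) * e ^ n) := by
  induction n with
  | zero => simp [← hef]
  | succ n ih =>
    have hef' : e * f = f * e + h := by rw [← hef]; abel
    calc e ^ (n + 1 + 1) * f = e * (e ^ (n + 1) * f) := by rw [pow_succ', mul_assoc]
      _ = (e * f) * e ^ (n + 1) + ((n + 1 : ℕ) : A) * ((e * (h - n)) * e ^ n) := by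
        rw [ih, mul_add, ← mul_assoc e ((n + 1 : ℕ) : A), ← Nat.cast_comm]
        simp only [mul_assoc]
      _ = f * e ^ (n + 1 + 1) + ((n + 1 + 1 : ℕ) : A) * ((h - (n + 1 : ℕ)) * e ^ (n + 1)) := by
        rw [mul_sub_natCast_eq_of_sl2 he, mul_assoc _ e, ← pow_succ', pow_succ' e (n + 1), hef']
        generalize e ^ (n + 1) = X
        push_cast; noncomm_ring

theorem pow_succ_mul_sub_mem_span_of_sl2 (he : h * e - e * h = 2 * e)
    (hef : e * f - f * e = h) (n : ℕ) :
    e ^ (n + 1) * f - ((n + 1 : ℕ) : A) * ((h - n) * e ^ n) ∈ Submodule.span A {e ^ (n + 1)} := by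
  rw [pow_succ_mul_of_sl2 he hef, add_sub_cancel_right]
  exact Ideal.mul_mem_left _ _ (Submodule.mem_span_singleton_self _)

theorem mul_mem_span_pow_of_sl2 (he : h * e - e * h = 2 * e) (hef : e * f - f * e = h) {n : ℕ}
    {x : A} (hx : x ∈ Submodule.span A {e ^ (n + 2)}) :
    x * f ∈ Submodule.span A {e ^ (n + 1)} := by
  obtain ⟨c, rfl⟩ := Submodule.mem_span_singleton.mp hx
  rw [smul_eq_mul, mul_assoc, pow_succ_mul_of_sl2 he hef (n + 1), pow_succ' e (n + 1), ← mul_assoc,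
    ← mul_assoc, ← add_mul]
  exact Ideal.mul_mem_left _ c (Ideal.mul_mem_left _ _ (Submodule.mem_span_singleton_self _))

theorem pow_add_mul_pow_sub_mem_span_of_sl2 (he : h * e - e * h = 2 * e)
    (hef : e * f - f * e = h) (n k : ℕ) :
    e ^ (n + k) * f ^ k - ((n + k).descFactorial k : A) *
        (((List.range k).map fun j => h - ((n + j : ℕ) : A)).prod * e ^ n)
      ∈ Submodule.span A {e ^ (n + 1)} := by
  induction k generalizing n with
  | zero => simp
  | succ k ih =>
    set D : A := ((n + 1 + k).descFactorial k : A)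
    set P := ((List.range k).map fun j => h - ((n + 1 + j : ℕ) : A)).prod with hP
    have hD : ((n + (k + 1)).descFactorial (k + 1) : A) = ((n + 1 : ℕ) : A) * D := by
      rw [Nat.descFactorial_succ, show n + (k + 1) - k = n + 1 by omega, Nat.cast_mul,
        show n + (k + 1) = n + 1 + k by omega]
    have hsplit : e ^ (n + (k + 1)) * f ^ (k + 1) - ((n + (k + 1)).descFactorial (k + 1) : A) *
          (((List.range (k + 1)).map fun j => h - ((n + j : ℕ) : A)).prod * e ^ n) =
        (e ^ (n + 1 + k) * f ^ k - D * (P * e ^ (n + 1))) * f +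
          D * (P * (e ^ (n + 1) * f - ((n + 1 : ℕ) : A) * ((h - n) * e ^ n))) := by
      rw [hD, prod_range_succ_map_sub_natCast,
        (commute_prod_map_sub_natCast h _ (n + 1) n).eq.symm, ← hP,
        show n + (k + 1) = n + 1 + k by omega, pow_succ, Nat.cast_comm (n + 1) D,
        mul_sub P (e ^ (n + 1) * f), ← mul_assoc P ((n + 1 : ℕ) : A), ← Nat.cast_comm (n + 1) P]
      noncomm_ring
    rw [hsplit]
    exact add_mem (mul_mem_span_pow_of_sl2 he hef (ih (n + 1)))
      (Ideal.mul_mem_left _ _ (Ideal.mul_mem_left _ _ (pow_succ_mul_sub_mem_span_of_sl2 he hef n)))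

end

theorem stmt8_general {A : Type*} [Ring A] (e f h : A)
    (he : h * e - e * h = 2 * e)
    (hef : e * f - f * e = h)
    (m k : ℕ) (hk : k ≤ m) :
    e ^ m * f ^ k -
      (Nat.descFactorial m k : A) *
        (((List.range k).map (fun j => h - ((m - k + j : ℕ) : A))).prod * e ^ (m - k))
      ∈ Submodule.span A {e ^ (m - k + 1)} := by
  obtain ⟨n, rfl⟩ := Nat.exists_eq_add_of_le' hk
  rw [Nat.add_sub_cancel]
  exact pow_add_mul_pow_sub_mem_span_of_sl2 he hef n k

/-- If `e, f, h` in an associative ℂ-algebra satisfy the `sl₂` relations, then for `m ≥ k ≥ 0`,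
`e^m f^k ≡ m(m-1)⋯(m-k+1) ⬝ (h-m+k)(h-m+k-1)⋯(h-m+1) ⬝ e^(m-k)` modulo the left ideal
generated by `e^(m-k+1)`. -/
theorem stmt8 {A : Type*} [Ring A] [Algebra ℂ A] (e f h : A)
    (he : h * e - e * h = 2 * e) (hf : h * f - f * h = -(2 * f))
    (hef : e * f - f * e = h)
    (m k : ℕ) (hk : k ≤ m) :
    e ^ m * f ^ k -
      (Nat.descFactorial m k : A) *
        (((List.range k).map (fun j => h - ((m - k + j : ℕ) : A))).prod * e ^ (m - k))
      ∈ Submodule.span A {e ^ (m - k + 1)} :=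
  stmt8_general e f h he hef m k hk
end

section
/- In U(sl_2) (generators e, f, h with [h,e]=2e, [h,f]=-2f, [e,f]=h), for all integers k, m with 0 ≤ m ≤ k, (ad f)^m (e^k) ≡ (-1)^m · k(k-1)···(k-m+1) · (h-k+1)(h-k+2)···(h-k+m) · e^{k-m} modulo the left ideal generated by e^{k-m+1}. -/
/-!
The commutation rule `e^(n+1) f = f e^(n+1) + (n+1)(h - n) e^n` shows that `ad f` maps the left
ideal `U e^(n+1)` into `U e^n`, and that modulo `U e^(n+1)` it acts on `b e^(n+1)` as
`b e^(n+1) ↦ -(n+1) b (h - n) e^n`. Iterating this `m` times starting from `e^k` produces the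
coefficients `(-1)^m k(k-1)⋯(k-m+1)` and the factors `h - (k-1-j)`, `j < m`.
Only the relations `[h, e] = 2e` and `[e, f] = h` are used, so the computation is done in an
arbitrary ring containing such `e`, `f`, `h`.
-/

open LieAlgebra.SpecialLinear

/-- The universal enveloping algebra `U(sl₂(ℂ))`. -/
noncomputable abbrev Usl2 : Type := UniversalEnvelopingAlgebra ℂ (sl (Fin 2) ℂ)

/-- The image in `U(sl₂)` of the standard generator `e = E₁₂`. -/
noncomputable def uE : Usl2 := UniversalEnvelopingAlgebra.ι ℂ (single (0 : Fin 2) (1 : Fin 2) (by decide) (1 : ℂ))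

/-- The image in `U(sl₂)` of the standard generator `f = E₂₁`. -/
noncomputable def uF : Usl2 := UniversalEnvelopingAlgebra.ι ℂ (single (1 : Fin 2) (0 : Fin 2) (by decide) (1 : ℂ))

/-- The image in `U(sl₂)` of the standard generator `h = ⁅e, f⁆`. -/
noncomputable def uH : Usl2 :=
  UniversalEnvelopingAlgebra.ι ℂ ⁅(single (0:Fin 2) (1:Fin 2) (by decide) (1 : ℂ) : sl (Fin 2) ℂ), (single (1:Fin 2) (0:Fin 2) (by decide) (1 : ℂ) : sl (Fin 2) ℂ)⁆

open Submodule UniversalEnvelopingAlgebra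

theorem span_singleton_pow_succ_le {A : Type*} [Semiring A] (e : A) (n : ℕ) :
    span A {e ^ (n + 1)} ≤ span A {e ^ n} := by
  rw [span_singleton_le_iff_mem, pow_succ', ← smul_eq_mul]
  exact smul_mem _ _ (mem_span_singleton_self _)

section

variable {A : Type*} [Ring A] {e f h : A}

theorem mul_sub_natCast_eq (hhe : h * e = e * h + 2 * e) (c : ℕ) :
    e * (h - c) = (h - (c + 2 : ℕ)) * e := by
  have : e * h = h * e - 2 * e := by rw [hhe]; abel
  push_cast
  rw [mul_sub, this, ← Nat.cast_comm]
  noncomm_ring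

theorem pow_succ_mul_eq (hhe : h * e = e * h + 2 * e) (hef : e * f = f * e + h) (n : ℕ) :
    e ^ (n + 1) * f = f * e ^ (n + 1) + (n + 1 : ℕ) * (h - n) * e ^ n := by
  induction n with
  | zero => simpa using hef
  | succ n ih =>
    have key : e * ((n + 1 : ℕ) * (h - n) * e ^ n) =
        (n + 1 : ℕ) * ((h - (n + 2 : ℕ)) * e ^ (n + 1)) := by
      rw [← mul_assoc, ← mul_assoc, ← Nat.cast_comm, mul_assoc _ e, mul_sub_natCast_eq hhe,
        mul_assoc, mul_assoc, ← pow_succ']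
    rw [pow_succ' e (n + 1), mul_assoc, ih, mul_add, ← mul_assoc e f, hef, key]
    push_cast
    noncomm_ring

theorem ad_mul_pow_succ_add_mem (hhe : h * e = e * h + 2 * e) (hef : e * f = f * e + h)
    (b : A) (n : ℕ) :
    f * (b * e ^ (n + 1)) - b * e ^ (n + 1) * f + (n + 1 : ℕ) * (b * (h - n) * e ^ n) ∈
      span A {e ^ (n + 1)} := by
  have : f * (b * e ^ (n + 1)) - b * e ^ (n + 1) * f + (n + 1 : ℕ) * (b * (h - n) * e ^ n) =
      (f * b - b * f) • e ^ (n + 1) := by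
    rw [mul_assoc b, pow_succ_mul_eq hhe hef, smul_eq_mul]
    simp only [← mul_assoc]
    rw [(Nat.cast_commute (n + 1) b).eq]
    noncomm_ring
  exact this ▸ smul_mem _ _ (mem_span_singleton_self _)

theorem ad_mem_span_pow_of_mem (hhe : h * e = e * h + 2 * e) (hef : e * f = f * e + h)
    {x : A} {n : ℕ} (hx : x ∈ span A {e ^ (n + 1)}) : f * x - x * f ∈ span A {e ^ n} := by
  obtain ⟨b, rfl⟩ := mem_span_singleton.mp hx
  have hb := span_singleton_pow_succ_le e n (ad_mul_pow_succ_add_mem hhe hef b n)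
  have hc : ((n + 1 : ℕ) : A) * (b * (h - n) * e ^ n) ∈ span A {e ^ n} :=
    smul_mem _ _ (smul_mem _ _ (mem_span_singleton_self _))
  simpa [smul_eq_mul] using sub_mem hb hc

theorem iterate_ad_pow_sub_mem (hhe : h * e = e * h + 2 * e) (hef : e * f = f * e + h)
    {k m : ℕ} (hm : m ≤ k) :
    (fun a => f * a - a * f)^[m] (e ^ k) -
      ((-1 : A) ^ m * (Nat.descFactorial k m : A) *
        (((List.range m).map (fun j => h - ((k - 1 - j : ℕ) : A))).prod * e ^ (k - m)))
      ∈ span A {e ^ (k - m + 1)} := by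
  induction m with
  | zero => simp
  | succ m ih =>
    obtain ⟨n, rfl⟩ := Nat.exists_eq_add_of_lt hm
    have coeff : (-1 : A) ^ (m + 1) * (Nat.descFactorial (m + n + 1) (m + 1) : A) =
        -(((n + 1 : ℕ) : A) * ((-1) ^ m * (Nat.descFactorial (m + n + 1) m : A))) := by
      rw [Nat.descFactorial_succ, show m + n + 1 - m = n + 1 by omega, Nat.cast_mul,
        ← mul_assoc (G := A) _ ((-1) ^ m), (Nat.cast_commute (n + 1) ((-1 : A) ^ m)).eq, pow_succ]
      noncomm_ring
    have hx := ad_mem_span_pow_of_mem hhe hef (ih (by omega))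
    rw [show m + n + 1 - m = n + 1 by omega] at hx
    rw [show m + n + 1 - (m + 1) = n by omega, Function.iterate_succ_apply', List.range_succ,
      List.map_append, List.prod_append, coeff]
    simp only [List.map_cons, List.map_nil, List.prod_cons, List.prod_nil, mul_one,
      show m + n + 1 - 1 - m = n by omega]
    set P := ((List.range m).map (fun j => h - ((m + n + 1 - 1 - j : ℕ) : A))).prod
    have hy := ad_mul_pow_succ_add_mem hhe hef ((-1) ^ m * (m + n + 1).descFactorial m * P) n
    convert add_mem hx hy using 1
    noncomm_ring

end

section

attribute [local instance 100] LieRing.ofAssociativeRing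

theorem UniversalEnvelopingAlgebra.ι_lie {R L : Type*} [CommRing R] [LieRing L] [LieAlgebra R L]
    (x y : L) : ι R ⁅x, y⁆ = ι R x * ι R y - ι R y * ι R x := by
  rw [LieHom.map_lie, Ring.lie_def]

end

theorem lie_lie_single_single_eq_two_smul (R : Type*) [CommRing R] :
    ⁅⁅(single (0 : Fin 2) (1 : Fin 2) (by decide) (1 : R) : sl (Fin 2) R),
      (single (1 : Fin 2) (0 : Fin 2) (by decide) (1 : R) : sl (Fin 2) R)⁆,
      (single (0 : Fin 2) (1 : Fin 2) (by decide) (1 : R) : sl (Fin 2) R)⁆ =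
      (2 : R) • (single (0 : Fin 2) (1 : Fin 2) (by decide) (1 : R) : sl (Fin 2) R) := by
  apply Subtype.ext
  ext i j
  fin_cases i <;> fin_cases j <;>
    simp [LieSubalgebra.coe_bracket, Ring.lie_def, Matrix.mul_apply, Fin.sum_univ_two,
      one_add_one_eq_two]

theorem uH_mul_uE : uH * uE = uE * uH + 2 * uE := by
  have h := ι_lie (R := ℂ)
    ⁅(single (0 : Fin 2) (1 : Fin 2) (by decide) (1 : ℂ) : sl (Fin 2) ℂ),
      (single (1 : Fin 2) (0 : Fin 2) (by decide) (1 : ℂ) : sl (Fin 2) ℂ)⁆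
    (single (0 : Fin 2) (1 : Fin 2) (by decide) (1 : ℂ) : sl (Fin 2) ℂ)
  rw [lie_lie_single_single_eq_two_smul, map_smul, two_smul, ← two_mul] at h
  change 2 * uE = uH * uE - uE * uH at h
  rw [sub_eq_iff_eq_add'.mp h.symm]

theorem uE_mul_uF : uE * uF = uF * uE + uH := by
  have h := ι_lie (R := ℂ)
    (single (0 : Fin 2) (1 : Fin 2) (by decide) (1 : ℂ) : sl (Fin 2) ℂ)
    (single (1 : Fin 2) (0 : Fin 2) (by decide) (1 : ℂ) : sl (Fin 2) ℂ)
  change uH = uE * uF - uF * uE at h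
  rw [sub_eq_iff_eq_add'.mp h.symm]

/-- In `U(sl₂)`, for `0 ≤ m ≤ k`:
`(ad f)^m (e^k) ≡ (-1)^m k(k-1)⋯(k-m+1) ⬝ (h-k+1)(h-k+2)⋯(h-k+m) ⬝ e^(k-m)`
modulo the left ideal generated by `e^(k-m+1)`. -/
theorem stmt9 (k m : ℕ) (hm : m ≤ k) :
    (fun a => uF * a - a * uF)^[m] (uE ^ k) -
      ((-1 : Usl2) ^ m * (Nat.descFactorial k m : Usl2) *
        (((List.range m).map (fun j => uH - ((k - 1 - j : ℕ) : Usl2))).prod * uE ^ (k - m)))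
      ∈ Submodule.span Usl2 {uE ^ (k - m + 1)} := by
  exact iterate_ad_pow_sub_mem uH_mul_uE uE_mul_uF hm
end

section
/- For every positive integer n and every element x of a commutative ℚ-algebra, ∑_{t=0}^{n} (-1)^t · ((2n-t)!/(n-t)!) · C(x, t) = (-1)^n · n! · C(x - n - 1, n), where C(x, t) = x(x-1)···(x-t+1)/t! is the generalized binomial coefficient. -/
/-!
In a binomial ring, `C(x - n - 1, n) = ∑ₜ C(x, t) C(-n-1, n-t)` by Chu–Vandermonde, and
`C(-n-1, n-t) = (-1)^(n-t) C(2n-t, n-t)`. Multiplying by `(-1)^n n!` and using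
`n! C(2n-t, n-t) = (2n-t)!/(n-t)!` gives the identity term by term. A commutative ℚ-algebra is
a binomial ring, in which `gbinom` is `Ring.choose`.
-/

/-- The generalized binomial coefficient `C(x, r) = x(x-1)⋯(x-r+1)/r!` of an element `x`
of a commutative ℚ-algebra. -/
noncomputable def gbinom {A : Type*} [CommRing A] [Algebra ℚ A] (x : A) (r : ℕ) : A :=
  ((r.factorial : ℚ)⁻¹) • ∏ j ∈ Finset.range r, (x - j)

open Finset Polynomial

theorem descPochhammer_smeval_eq_prod_range {R : Type*} [CommRing R] (r : R) (n : ℕ) :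
    (descPochhammer ℤ n).smeval r = ∏ j ∈ range n, (r - j) := by
  rw [← aeval_eq_smeval, aeval_def, eval₂_eq_eval_map, descPochhammer_map,
    descPochhammer_eval_eq_prod_range]

theorem gbinom_eq_choose {A : Type*} [CommRing A] [Algebra ℚ A] [BinomialRing A] (x : A)
    (r : ℕ) : gbinom x r = Ring.choose x r := by
  rw [gbinom, ← descPochhammer_smeval_eq_prod_range, Ring.descPochhammer_eq_factorial_smul_choose,
    ← Nat.cast_smul_eq_nsmul ℚ, inv_smul_smul₀ (by exact_mod_cast r.factorial_ne_zero)]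

namespace Ring

variable {R : Type*} [Ring R] [BinomialRing R]

theorem choose_neg_natCast_succ (m j : ℕ) :
    choose (-((m + 1 : ℕ) : R)) j = (-1) ^ j * ((m + j).choose j : R) := by
  rw [choose_neg, show ((m + 1 : ℕ) : R) + j - 1 = ((m + j : ℕ) : R) by push_cast; abel,
    choose_natCast, Units.smul_def, Int.negOnePow_def, zsmul_eq_mul]
  simp

theorem choose_sub_natCast_succ (r : R) (m n : ℕ) :
    choose (r - ((m + 1 : ℕ) : R)) n =
      ∑ t ∈ range (n + 1), choose r t * ((-1) ^ (n - t) * ((m + (n - t)).choose (n - t) : R)) := by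
  rw [sub_eq_add_neg, add_choose_eq _ (Commute.neg_right (Nat.cast_commute _ r).symm),
    Nat.sum_antidiagonal_eq_sum_range_succ (fun i j => choose r i * choose _ j)]
  simp only [choose_neg_natCast_succ]

end Ring

theorem Nat.descFactorial_two_mul_sub {n t : ℕ} (ht : t ≤ n) :
    (2 * n - t).descFactorial n = n.factorial * (n + (n - t)).choose (n - t) := by
  rw [show 2 * n - t = n + (n - t) by omega, Nat.descFactorial_eq_factorial_mul_choose,
    Nat.choose_symm_add]

theorem stmt13_general {A : Type*} [CommRing A] [Algebra ℚ A] (n : ℕ) (x : A) :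
    ∑ t ∈ Finset.range (n + 1),
        (-1 : A) ^ t * (Nat.descFactorial (2 * n - t) n : A) * gbinom x t =
      (-1 : A) ^ n * (Nat.factorial n : A) * gbinom (x - ((n + 1 : ℕ) : A)) n := by
  -- makes `A` a `BinomialRing`
  let : Module ℚ≥0 A := Module.compHom A (algebraMap ℚ≥0 ℚ)
  simp only [gbinom_eq_choose, Ring.choose_sub_natCast_succ, mul_sum]
  refine sum_congr rfl fun t ht => ?_
  have htn : t ≤ n := Nat.lt_succ_iff.mp (mem_range.mp ht)
  have hsign : (-1 : A) ^ t = (-1) ^ n * (-1) ^ (n - t) := by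
    obtain ⟨k, rfl⟩ := Nat.exists_eq_add_of_le htn
    rw [Nat.add_sub_cancel_left, pow_add, mul_assoc, ← mul_pow, neg_one_mul, neg_neg, one_pow,
      mul_one]
  rw [Nat.descFactorial_two_mul_sub htn, hsign]
  push_cast
  ring

/-- `∑_{t=0}^{n} (-1)^t (2n-t)!/(n-t)! ⬝ C(x, t) = (-1)^n n! C(x-n-1, n)`. -/
theorem stmt13 {A : Type*} [CommRing A] [Algebra ℚ A] (n : ℕ) (hn : 1 ≤ n) (x : A) :
    ∑ t ∈ Finset.range (n + 1),
        (-1 : A) ^ t * (Nat.descFactorial (2 * n - t) n : A) * gbinom x t =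
      (-1 : A) ^ n * (Nat.factorial n : A) * gbinom (x - ((n + 1 : ℕ) : A)) n :=
  stmt13_general n x
end

section
/- For every positive integer n, the following identity holds: ∑_{t=0}^{n} (2n-t)(2n-t-1)···(n-t+1) · (-1)^t · C(x+2n-1, t) = n! · (-1)^n · C(x+n-2, n), as polynomials in x with rational coefficients, where C(y, r) = y(y-1)···(y-r+1)/r!. -/
/-!
Upper negation turns `(-1)^t C(y, t)` into the multiset coefficient `multichoose (-y) t`, and
`(2n-t)⋯(n-t+1) = n! C(2n-t, n) = n! multichoose (n+1) (n-t)`. The sum is then `n!` times the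
Chu–Vandermonde convolution for `multichoose`, i.e. `n! multichoose (n+1-y) n`, and one more
upper negation gives `n! (-1)^n C(y-n-1, n)`; here `y = x + 2n - 1`.
-/

open Finset Polynomial

namespace Ring

variable {R : Type*} [CommRing R] [BinomialRing R]

theorem multichoose_eq_neg_one_pow_mul_choose (r : R) (n : ℕ) :
    multichoose r n = (-1) ^ n * choose (-r) n := by
  rw [choose_neg', Units.smul_def, zsmul_eq_mul, ← mul_assoc,
    Int.cast_negOnePow_natCast, ← mul_pow, neg_one_mul, neg_neg, one_pow, one_mul]

theorem multichoose_natCast_add_one (k n : ℕ) :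
    multichoose ((k + 1 : ℕ) : R) n = (k + n).choose n := by
  rw [multichoose_eq, ← choose_natCast]
  congr 1
  push_cast
  ring

theorem add_multichoose_eq (r s : R) (k : ℕ) :
    multichoose (r + s) k = ∑ ij ∈ antidiagonal k, multichoose r ij.1 * multichoose s ij.2 := by
  simp_rw [multichoose_eq_neg_one_pow_mul_choose, neg_add,
    add_choose_eq k (Commute.all (-r) (-s)), mul_sum]
  refine sum_congr rfl fun ij hij => ?_
  rw [← mem_antidiagonal.mp hij, pow_add]
  ring

theorem sum_descFactorial_mul_neg_one_pow_mul_choose (y : R) (n : ℕ) :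
    ∑ t ∈ range (n + 1), ((2 * n - t).descFactorial n : R) * (-1) ^ t * choose y t =
      n.factorial * (-1) ^ n * choose (y - n - 1) n := by
  have hterm : ∀ t ∈ range (n + 1), ((2 * n - t).descFactorial n : R) * (-1) ^ t * choose y t =
      n.factorial * (multichoose (-y) t * multichoose ((n + 1 : ℕ) : R) (n - t)) := by
    intro t ht
    have htn : t ≤ n := Nat.lt_succ_iff.mp (mem_range.mp ht)
    rw [multichoose_eq_neg_one_pow_mul_choose, neg_neg, multichoose_natCast_add_one,
      Nat.descFactorial_eq_factorial_mul_choose, show 2 * n - t = n + (n - t) by omega,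
      Nat.choose_symm_add]
    push_cast
    ring
  rw [sum_congr rfl hterm, ← mul_sum, ← Nat.sum_antidiagonal_eq_sum_range_succ
    (fun i j => multichoose (-y) i * multichoose ((n + 1 : ℕ) : R) j), ← add_multichoose_eq,
    multichoose_eq_neg_one_pow_mul_choose, mul_assoc]
  congr 3
  push_cast
  ring

end Ring

open Polynomial in
/-- As polynomials in `x` over ℚ:
`∑_{t=0}^{n} (2n-t)⋯(n-t+1) (-1)^t C(x+2n-1, t) = n! (-1)^n C(x+n-2, n)`. -/
theorem stmt19 (n : ℕ) (hn : 1 ≤ n) :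
    ∑ t ∈ Finset.range (n + 1),
        (Nat.descFactorial (2 * n - t) n : ℚ[X]) * (-1 : ℚ[X]) ^ t *
          gbinom (X + ((2 * n - 1 : ℕ) : ℚ[X])) t =
      (Nat.factorial n : ℚ[X]) * (-1 : ℚ[X]) ^ n *
        gbinom (X + (((n : ℤ) - 2 : ℤ) : ℚ[X])) n := by
  simp only [gbinom_eq_choose]
  rw [Ring.sum_descFactorial_mul_neg_one_pow_mul_choose]
  congr 2
  push_cast [Nat.cast_sub (by omega : 1 ≤ 2 * n)]
  ring
end
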